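/- If G and H are graphs without isolated vertices, at most one of them has a universal vertex, γ_t(G) = γ_t(H) = 2, and G and H are not both triangle centered, then γ_tR(G × H) = 8. -/

import Mathlib

open Finset

/-- A total Roman dominating function: labels in {0,1,2}, every 0-labeled vertex has a
2-labeled neighbor, and positive-labeled vertices induce a subgraph with no isolated vertex. -/
def IsTRDF {V : Type*} (G : SimpleGraph V) (f : V → ℕ) : Prop :=
  (∀ v, f v ≤ 2) ∧
  (∀ v, f v = 0 → ∃ u, G.Adj v u ∧ f u = 2) ∧
  (∀ v, 0 < f v → ∃ u, G.Adj v u ∧ 0 < f u)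

/-- The total Roman domination number. -/
noncomputable def trdn {V : Type*} (G : SimpleGraph V) [Fintype V] : ℕ :=
  sInf {w | ∃ f : V → ℕ, IsTRDF G f ∧ ∑ v, f v = w}

/-- A total dominating set. -/
def IsTotalDomSet {V : Type*} (G : SimpleGraph V) (D : Set V) : Prop :=
  ∀ v, ∃ u ∈ D, G.Adj v u

/-- The total domination number. -/
noncomputable def tdn {V : Type*} (G : SimpleGraph V) [Fintype V] : ℕ :=
  sInf {n | ∃ D : Finset V, IsTotalDomSet G ↑D ∧ D.card = n}

/-- A packing: pairwise disjoint closed neighborhoods. -/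
def IsPacking {V : Type*} (G : SimpleGraph V) (S : Set V) : Prop :=
  ∀ u ∈ S, ∀ v ∈ S, u ≠ v →
    Disjoint (insert u (G.neighborSet u)) (insert v (G.neighborSet v))

/-- The packing number. -/
noncomputable def packingNumber {V : Type*} (G : SimpleGraph V) [Fintype V] : ℕ :=
  sSup {n | ∃ S : Finset V, IsPacking G ↑S ∧ S.card = n}

/-- An open packing: pairwise disjoint open neighborhoods. -/
def IsOpenPacking {V : Type*} (G : SimpleGraph V) (S : Set V) : Prop :=
  ∀ u ∈ S, ∀ v ∈ S, u ≠ v → Disjoint (G.neighborSet u) (G.neighborSet v)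

/-- The open packing number. -/
noncomputable def openPackingNumber {V : Type*} (G : SimpleGraph V) [Fintype V] : ℕ :=
  sSup {n | ∃ S : Finset V, IsOpenPacking G ↑S ∧ S.card = n}

/-- The direct (tensor) product of two simple graphs. -/
def dirProd {V W : Type*} (G : SimpleGraph V) (H : SimpleGraph W) : SimpleGraph (V × W) where
  Adj p q := G.Adj p.1 q.1 ∧ H.Adj p.2 q.2
  symm := ⟨fun p q h => ⟨h.1.symm, h.2.symm⟩⟩
  loopless := ⟨fun p h => G.loopless.irrefl p.1 h.1⟩

/-- A graph with no isolated vertices. -/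
def NoIsolated {V : Type*} (G : SimpleGraph V) : Prop := ∀ v, ∃ u, G.Adj v u

/-- A graph is triangle centered if it has a triangle such that every vertex is
adjacent to at least two of its vertices. -/
def TriangleCentered {V : Type*} (G : SimpleGraph V) : Prop :=
  ∃ x y z : V, G.Adj x y ∧ G.Adj y z ∧ G.Adj x z ∧
    ∀ v : V, (G.Adj v x ∧ G.Adj v y) ∨ (G.Adj v y ∧ G.Adj v z) ∨ (G.Adj v x ∧ G.Adj v z)

/-- A universal vertex is adjacent to all other vertices. -/
def IsUniversalVertex {V : Type*} (G : SimpleGraph V) (v : V) : Prop :=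
  ∀ u, u ≠ v → G.Adj v u

/-! Labelling `D × E` with 2, for total dominating sets `D` of `G` and `E` of `H` of size 2,
gives weight 8. Conversely, let `S` be the set of vertices labelled 2 by a total Roman dominating
function of weight at most 7, so `|S| ≤ 3`. Every vertex adjacent to no vertex of `S` is
positive; counting such vertices settles `|S| ≤ 2`, using that a graph with neither isolated nor
universal vertices has at least four vertices. If `|S| = 3`, at most one vertex is labelled 1.
Then two vertices of `S` with the same first (or second) coordinate would make both factors have a
universal vertex, and otherwise the two projections of `S` are triangles showing that `G` and `H`
are both triangle centered. -/

@[simp] lemma dirProd_adj {V W : Type*} {G : SimpleGraph V} {H : SimpleGraph W} {p q : V × W} :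
    (dirProd G H).Adj p q ↔ G.Adj p.1 q.1 ∧ H.Adj p.2 q.2 := Iff.rfl

lemma sum_comp_swap {V W M : Type*} [Fintype V] [Fintype W] [AddCommMonoid M] (f : V × W → M) :
    ∑ v, (f ∘ Prod.swap) v = ∑ v, f v :=
  Equiv.sum_comp (Equiv.prodComm W V) f

section Graph

variable {V : Type*} [Fintype V] {G : SimpleGraph V}

lemma NoIsolated.one_lt_card [Nonempty V] (hG : NoIsolated G) : 1 < Fintype.card V := by
  obtain ⟨v⟩ := ‹Nonempty V›
  obtain ⟨u, hvu⟩ := hG v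
  exact Fintype.one_lt_card_iff_nontrivial.mpr ⟨v, u, hvu.ne⟩

lemma NoIsolated.four_le_card [Nonempty V] (hG : NoIsolated G)
    (hU : ¬ ∃ v, IsUniversalVertex G v) : 4 ≤ Fintype.card V := by
  classical
  simp only [IsUniversalVertex, not_exists, not_forall] at hU
  obtain ⟨v⟩ := ‹Nonempty V›
  obtain ⟨u, hvu⟩ := hG v
  obtain ⟨v', hv'v, hvv'⟩ := hU v
  have hv'u : v' ≠ u := fun h => hvv' (h ▸ hvu)
  -- a fourth vertex: a non-neighbour of `u` if `u ~ v'`, and a neighbour of `v'` otherwise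
  obtain ⟨w, hwv, hwu, hwv'⟩ : ∃ w, w ≠ v ∧ w ≠ u ∧ w ≠ v' := by
    by_cases huv' : G.Adj u v'
    · obtain ⟨w, hwu, huw⟩ := hU u
      exact ⟨w, fun h => huw (h ▸ hvu.symm), hwu, fun h => huw (h ▸ huv')⟩
    · obtain ⟨w, hv'w⟩ := hG v'
      exact ⟨w, fun h => hvv' (h ▸ hv'w.symm), fun h => huv' (h ▸ hv'w.symm),
        fun h => G.loopless.irrefl v' (h ▸ hv'w)⟩
  calc 4 = #{v, u, v', w} := by
        rw [card_insert_of_notMem (by simp [hvu.ne, hv'v.symm, hwv.symm]),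
          card_insert_of_notMem (by simp [hv'u.symm, hwu.symm]), card_pair hwv'.symm]
    _ ≤ Fintype.card V := card_le_univ _

lemma degree_add_two_le_card [DecidableEq V] [DecidableRel G.Adj] {v : V}
    (hv : ¬ IsUniversalVertex G v) : G.degree v + 2 ≤ Fintype.card V := by
  simp only [IsUniversalVertex, not_forall] at hv
  obtain ⟨u, huv, hvu⟩ := hv
  calc G.degree v + 2 = #(insert u (insert v (G.neighborFinset v))) := by
        rw [card_insert_of_notMem (by simp [huv, hvu]), card_insert_of_notMem (by simp),
          SimpleGraph.card_neighborFinset_eq_degree]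
    _ ≤ Fintype.card V := card_le_univ _

lemma exists_isTotalDomSet_card_eq_tdn (h : tdn G ≠ 0) :
    ∃ D : Finset V, IsTotalDomSet G D ∧ #D = tdn G := by
  refine Nat.sInf_mem (s := {n | ∃ D : Finset V, IsTotalDomSet G D ∧ #D = n})
    (Set.nonempty_iff_ne_empty.mpr fun he => h ?_)
  rw [tdn, he, Nat.sInf_empty]

end Graph

section TRDF

variable {α : Type*} {G : SimpleGraph α} {f : α → ℕ}

lemma card_add_card_le_sum [Fintype α] {T U : Finset α} (hT : ∀ v ∈ T, 0 < f v)
    (hU : ∀ v ∈ U, f v = 2) (hUT : U ⊆ T) : #T + #U ≤ ∑ v, f v := by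
  classical
  calc #T + #U = ∑ v ∈ T \ U, 1 + ∑ v ∈ U, 2 := by
        have := card_le_card hUT
        simp only [sum_const, card_sdiff_of_subset hUT, smul_eq_mul]
        omega
    _ ≤ ∑ v ∈ T \ U, f v + ∑ v ∈ U, f v := by
        gcongr with v hv v hv
        · exact hT v (mem_sdiff.mp hv).1
        · exact (hU v hv).ge
    _ = ∑ v ∈ T, f v := sum_sdiff hUT
    _ ≤ ∑ v, f v := sum_le_univ_sum_of_nonneg fun _ => Nat.zero_le _

namespace IsTRDF

lemma sum_eq_card_add_two_mul_card [Fintype α] (hf : IsTRDF G f) :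
    ∑ v, f v = #{v | f v = 1} + 2 * #{v | f v = 2} := by
  have hpt : ∀ v, f v = (if f v = 1 then 1 else 0) + 2 * (if f v = 2 then 1 else 0) := by
    intro v
    have := hf.1 v
    interval_cases f v <;> simp
  rw [sum_congr rfl fun v _ => hpt v, sum_add_distrib, ← mul_sum, sum_boole, sum_boole]
  simp

lemma pos_of_forall_not_adj (hf : IsTRDF G f) {v : α} (hv : ∀ s, f s = 2 → ¬ G.Adj v s) :
    0 < f v := by
  by_contra! h
  obtain ⟨s, hvs, hs⟩ := hf.2.1 v (by omega)
  exact hv s hs hvs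

lemma exists_ne_eq_one (hf : IsTRDF G f) {v : α} (hv2 : f v ≠ 2)
    (hv : ∀ s, f s = 2 → ¬ G.Adj v s) : ∃ x y, x ≠ y ∧ f x = 1 ∧ f y = 1 := by
  have hv0 := hf.pos_of_forall_not_adj hv
  obtain ⟨u, hvu, hu0⟩ := hf.2.2 v hv0
  have hu2 : f u ≠ 2 := fun h => hv u h hvu
  exact ⟨v, u, hvu.ne, by have := hf.1 v; omega, by have := hf.1 u; omega⟩

end IsTRDF

lemma trdn_le [Fintype α] (hf : IsTRDF G f) : trdn G ≤ ∑ v, f v :=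
  Nat.sInf_le ⟨f, hf, rfl⟩

lemma le_trdn [Fintype α] {k : ℕ} (hf : IsTRDF G f) (h : ∀ g, IsTRDF G g → k ≤ ∑ v, g v) :
    k ≤ trdn G := by
  obtain ⟨g, hg, hgsum⟩ := Nat.sInf_mem (⟨_, f, hf, rfl⟩ :
    {w | ∃ g : α → ℕ, IsTRDF G g ∧ ∑ v, g v = w}.Nonempty)
  rw [trdn, ← hgsum]
  exact h g hg

end TRDF

section DirProd

variable {V W : Type*} {G : SimpleGraph V} {H : SimpleGraph W}

lemma IsTotalDomSet.isTRDF_dirProd [DecidableEq V] [DecidableEq W] {D : Finset V}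
    {E : Finset W} (hD : IsTotalDomSet G D) (hE : IsTotalDomSet H E) :
    IsTRDF (dirProd G H) fun v => if v ∈ D ×ˢ E then 2 else 0 := by
  have hDE : ∀ v : V × W, ∃ u ∈ D ×ˢ E, (dirProd G H).Adj v u := fun v => by
    obtain ⟨a, ha, hva⟩ := hD v.1
    obtain ⟨b, hb, hvb⟩ := hE v.2
    exact ⟨(a, b), mem_product.mpr ⟨ha, hb⟩, hva, hvb⟩
  refine ⟨fun v => by dsimp only; split_ifs <;> omega, fun v _ => ?_, fun v _ => ?_⟩ <;>
  · obtain ⟨u, hu, hvu⟩ := hDE v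
    exact ⟨u, hvu, by simp [hu]⟩

lemma trdn_dirProd_le [Fintype V] [Fintype W] {D : Finset V} {E : Finset W}
    (hD : IsTotalDomSet G D) (hE : IsTotalDomSet H E) :
    trdn (dirProd G H) ≤ 2 * #D * #E := by
  classical
  calc trdn (dirProd G H) ≤ ∑ v, if v ∈ D ×ˢ E then 2 else 0 := trdn_le (hD.isTRDF_dirProd hE)
    _ = 2 * #D * #E := by rw [sum_ite_mem, univ_inter, sum_const, card_product]; ring

lemma four_le_card_or_four_le_card [Fintype V] [Fintype W] [Nonempty V] [Nonempty W]
    (hG : NoIsolated G) (hH : NoIsolated H)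
    (huniv : ¬ ((∃ v, IsUniversalVertex G v) ∧ (∃ w, IsUniversalVertex H w))) :
    4 ≤ Fintype.card V ∨ 4 ≤ Fintype.card W := by
  by_cases hU : ∃ v, IsUniversalVertex G v
  · exact .inr (hH.four_le_card fun hU' => huniv ⟨hU, hU'⟩)
  · exact .inl (hG.four_le_card hU)

end DirProd

namespace IsTRDF

variable {V W : Type*} {G : SimpleGraph V} {H : SimpleGraph W} {f : V × W → ℕ}

lemma swap (hf : IsTRDF (dirProd G H) f) : IsTRDF (dirProd H G) (f ∘ Prod.swap) := by
  refine ⟨fun v => hf.1 v.swap, fun v hv => ?_, fun v hv => ?_⟩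
  · obtain ⟨u, hvu, hu⟩ := hf.2.1 v.swap hv
    exact ⟨u.swap, ⟨hvu.2, hvu.1⟩, hu⟩
  · obtain ⟨u, hvu, hu⟩ := hf.2.2 v.swap hv
    exact ⟨u.swap, ⟨hvu.2, hvu.1⟩, hu⟩

lemma exists_ne_pos_adj_fst [Nonempty W] (hf : IsTRDF (dirProd G H) f) {a : V}
    (ha : ∀ y, 0 < f (a, y)) :
    ∃ p q : V × W, p ≠ q ∧ 0 < f p ∧ 0 < f q ∧ G.Adj a p.1 ∧ G.Adj a q.1 := by
  obtain ⟨y⟩ := ‹Nonempty W›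
  obtain ⟨p, hp, hp0⟩ := hf.2.2 (a, y) (ha y)
  obtain ⟨q, hq, hq0⟩ := hf.2.2 (a, p.2) (ha p.2)
  exact ⟨p, q, fun h => H.loopless.irrefl _ (h ▸ hq.2), hp0, hq0, hp.1, hq.1⟩

lemma exists_eq_two_adj_fst [Nonempty W] (hf : IsTRDF (dirProd G H) f)
    (hE : {v | f v = 1}.Subsingleton) (a : V) : ∃ s, f s = 2 ∧ G.Adj a s.1 := by
  by_contra! ha
  have hrow : ∀ y, 0 < f (a, y) := fun y =>
    hf.pos_of_forall_not_adj fun s hs h => ha s hs h.1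
  obtain ⟨p, q, hpq, hp0, hq0, hp, hq⟩ := hf.exists_ne_pos_adj_fst hrow
  have hp2 : f p ≠ 2 := fun h => ha p h hp
  have hq2 : f q ≠ 2 := fun h => ha q h hq
  exact hpq (hE (show f p = 1 by have := hf.1 p; omega) (show f q = 1 by have := hf.1 q; omega))

lemma eq_two_of_forall_adj_fst (hf : IsTRDF (dirProd G H) f)
    (hE : {v | f v = 1}.Subsingleton) {g : V} {b : W}
    (hgb : ∀ s, f s = 2 → G.Adj g s.1 → s.2 = b) : f (g, b) = 2 := by
  by_contra h
  obtain ⟨x, y, hxy, hx, hy⟩ :=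
    hf.exists_ne_eq_one h fun s hs hgs => H.loopless.irrefl b (hgb s hs hgs.1 ▸ hgs.2)
  exact hxy (hE hx hy)

lemma isUniversalVertex_of_corner [Nonempty W] (hf : IsTRDF (dirProd G H) f)
    (hE : {v | f v = 1}.Subsingleton) {c t u : V × W}
    (h2 : ∀ v, f v = 2 ↔ v = c ∨ v = t ∨ v = u) (hct : t.1 = c.1) (hcu : u.2 = c.2) :
    IsUniversalVertex G c.1 := by
  obtain ⟨r, hr, hcr⟩ := hf.exists_eq_two_adj_fst hE c.1
  have hcu' : G.Adj c.1 u.1 := by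
    rcases (h2 r).1 hr with rfl | rfl | rfl
    · exact absurd hcr (G.loopless.irrefl _)
    · exact absurd (hct ▸ hcr) (G.loopless.irrefl _)
    · exact hcr
  intro g hg
  by_contra hcg
  have hgc := hf.eq_two_of_forall_adj_fst hE (g := g) (b := c.2) fun r hr hgr => by
    rcases (h2 r).1 hr with rfl | rfl | rfl
    · exact absurd hgr.symm hcg
    · exact absurd (hct ▸ hgr).symm hcg
    · exact hcu
  rcases (h2 _).1 hgc with h | h | h
  · exact hg (congrArg Prod.fst h)
  · exact hg (hct ▸ congrArg Prod.fst h)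
  · obtain rfl : g = u.1 := (Prod.ext_iff.mp h).1
    exact hcg hcu'

lemma exists_universal_of_fst_eq [Nonempty V] [Nonempty W] (hf : IsTRDF (dirProd G H) f)
    (hE : {v | f v = 1}.Subsingleton) {s t u : V × W}
    (h2 : ∀ v, f v = 2 ↔ v = s ∨ v = t ∨ v = u) (hst : s.1 = t.1) :
    (∃ v, IsUniversalVertex G v) ∧ (∃ w, IsUniversalVertex H w) := by
  obtain ⟨r, hr, hsr⟩ := hf.exists_eq_two_adj_fst hE s.1
  have hsu : G.Adj s.1 u.1 := by
    rcases (h2 r).1 hr with rfl | rfl | rfl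
    · exact absurd hsr (G.loopless.irrefl _)
    · exact absurd (hst ▸ hsr) (G.loopless.irrefl _)
    · exact hsr
  have hsu2 := hf.eq_two_of_forall_adj_fst hE (g := s.1) (b := u.2) fun r hr h => by
    rcases (h2 r).1 hr with rfl | rfl | rfl
    · exact absurd h (G.loopless.irrefl _)
    · exact absurd (hst ▸ h) (G.loopless.irrefl _)
    · rfl
  -- the three vertices labelled 2 form an `L` with corner `c`
  obtain ⟨c, t', u', h2', hct, hcu⟩ : ∃ c t' u' : V × W,
      (∀ v, f v = 2 ↔ v = c ∨ v = t' ∨ v = u') ∧ t'.1 = c.1 ∧ u'.2 = c.2 := by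
    rcases (h2 _).1 hsu2 with h | h | h
    · exact ⟨s, t, u, h2, hst.symm, (Prod.ext_iff.mp h).2⟩
    · exact ⟨t, s, u, fun v => by rw [h2]; tauto, hst, (Prod.ext_iff.mp h).2⟩
    · exact absurd ((Prod.ext_iff.mp h).1 ▸ hsu) (G.loopless.irrefl _)
  refine ⟨⟨c.1, hf.isUniversalVertex_of_corner hE h2' hct hcu⟩, ⟨c.2, ?_⟩⟩
  exact hf.swap.isUniversalVertex_of_corner (c := c.swap) (t := u'.swap) (u := t'.swap)
    (hE.preimage Prod.swap_injective)
    (fun v => by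
      rw [Function.comp_apply, h2' v.swap]
      simp only [Prod.swap_eq_iff_eq_swap]
      tauto) hcu hct

lemma fst_ne_of_eq_two_iff [Nonempty V] [Nonempty W] (hf : IsTRDF (dirProd G H) f)
    (hE : {v | f v = 1}.Subsingleton)
    (huniv : ¬ ((∃ v, IsUniversalVertex G v) ∧ (∃ w, IsUniversalVertex H w)))
    {s₁ s₂ s₃ : V × W} (h2 : ∀ v, f v = 2 ↔ v = s₁ ∨ v = s₂ ∨ v = s₃) :
    s₁.1 ≠ s₂.1 ∧ s₁.1 ≠ s₃.1 ∧ s₂.1 ≠ s₃.1 :=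
  ⟨fun h => huniv (hf.exists_universal_of_fst_eq hE h2 h),
    fun h => huniv (hf.exists_universal_of_fst_eq hE (t := s₃) (u := s₂)
      (fun v => by rw [h2]; tauto) h),
    fun h => huniv (hf.exists_universal_of_fst_eq hE (s := s₂) (t := s₃) (u := s₁)
      (fun v => by rw [h2]; tauto) h)⟩

lemma adj_fst_of_eq_two_iff (hf : IsTRDF (dirProd G H) f) (hE : {v | f v = 1}.Subsingleton)
    {s t u : V × W} (h2 : ∀ v, f v = 2 ↔ v = s ∨ v = t ∨ v = u) (hst : s.1 ≠ t.1)
    (hsu : s.1 ≠ u.1) (hsu' : s.2 ≠ u.2) : G.Adj s.1 t.1 := by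
  by_contra hadj
  have := hf.eq_two_of_forall_adj_fst hE (g := s.1) (b := u.2) fun r hr h => by
    rcases (h2 r).1 hr with rfl | rfl | rfl
    · exact absurd h (G.loopless.irrefl _)
    · exact absurd h hadj
    · rfl
  rcases (h2 _).1 this with h | h | h
  · exact hsu' (Prod.ext_iff.mp h).2.symm
  · exact hst (Prod.ext_iff.mp h).1
  · exact hsu (Prod.ext_iff.mp h).1

lemma triangleCentered_of_eq_two_iff (hf : IsTRDF (dirProd G H) f)
    (hE : {v | f v = 1}.Subsingleton)
    {s₁ s₂ s₃ : V × W} (h2 : ∀ v, f v = 2 ↔ v = s₁ ∨ v = s₂ ∨ v = s₃)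
    (h₁₂ : s₁.1 ≠ s₂.1) (h₁₃ : s₁.1 ≠ s₃.1) (h₂₃ : s₂.1 ≠ s₃.1)
    (k₁₂ : s₁.2 ≠ s₂.2) (k₁₃ : s₁.2 ≠ s₃.2) (k₂₃ : s₂.2 ≠ s₃.2) : TriangleCentered G := by
  have e₁₂ := hf.adj_fst_of_eq_two_iff hE h2 h₁₂ h₁₃ k₁₃
  have e₁₃ := hf.adj_fst_of_eq_two_iff hE (t := s₃) (u := s₂) (fun v => by rw [h2]; tauto)
    h₁₃ h₁₂ k₁₂
  have e₂₃ := hf.adj_fst_of_eq_two_iff hE (s := s₂) (t := s₃) (u := s₁)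
    (fun v => by rw [h2]; tauto) h₂₃ h₁₂.symm k₁₂.symm
  have hinj : ∀ r r', f r = 2 → f r' = 2 → r.2 = r'.2 → r = r' := by
    intro r r' hr hr'
    rcases (h2 r).1 hr with rfl | rfl | rfl <;> rcases (h2 r').1 hr' with rfl | rfl | rfl <;>
      intro h <;> first | rfl | exact absurd h ‹_› | exact absurd h.symm ‹_›
  have lonely : ∀ g r, f r = 2 → (∀ r', f r' = 2 → G.Adj g r'.1 → r' = r) → g = r.1 :=
    fun g r hr hg => (Prod.ext_iff.mp <| hinj (g, r.2) r
      (hf.eq_two_of_forall_adj_fst hE fun r' hr' h => hg r' hr' h ▸ rfl) hr rfl).1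
  refine ⟨s₁.1, s₂.1, s₃.1, e₁₂, e₂₃, e₁₃, fun g => ?_⟩
  by_contra! hg
  obtain ⟨hg₁₂, hg₂₃, hg₁₃⟩ := hg
  by_cases hg₂ : G.Adj g s₂.1
  · have := lonely g s₂ ((h2 s₂).2 (by simp)) fun r hr h => by
      rcases (h2 r).1 hr with rfl | rfl | rfl
      exacts [absurd hg₂ (hg₁₂ h), rfl, absurd h (hg₂₃ hg₂)]
    exact G.loopless.irrefl _ (this ▸ hg₂)
  by_cases hg₃ : G.Adj g s₃.1
  · have := lonely g s₃ ((h2 s₃).2 (by simp)) fun r hr h => by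
      rcases (h2 r).1 hr with rfl | rfl | rfl
      exacts [absurd hg₃ (hg₁₃ h), absurd h hg₂, rfl]
    exact G.loopless.irrefl _ (this ▸ hg₃)
  have := lonely g s₁ ((h2 s₁).2 (by simp)) fun r hr h => by
    rcases (h2 r).1 hr with rfl | rfl | rfl
    exacts [rfl, absurd h hg₂, absurd h hg₃]
  exact hg₂ (this ▸ e₁₂)

lemma not_subsingleton_eq_one [Nonempty V] [Nonempty W] (hf : IsTRDF (dirProd G H) f)
    (huniv : ¬ ((∃ v, IsUniversalVertex G v) ∧ (∃ w, IsUniversalVertex H w)))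
    (htc : ¬ (TriangleCentered G ∧ TriangleCentered H))
    {s₁ s₂ s₃ : V × W} (h2 : ∀ v, f v = 2 ↔ v = s₁ ∨ v = s₂ ∨ v = s₃) :
    ¬ {v | f v = 1}.Subsingleton := by
  intro hE
  have hE' := hE.preimage Prod.swap_injective
  have h2' : ∀ v, (f ∘ Prod.swap) v = 2 ↔ v = s₁.swap ∨ v = s₂.swap ∨ v = s₃.swap :=
    fun v => by
      rw [Function.comp_apply, h2]
      simp only [Prod.swap_eq_iff_eq_swap]
  obtain ⟨d₁₂, d₁₃, d₂₃⟩ := hf.fst_ne_of_eq_two_iff hE huniv h2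
  obtain ⟨e₁₂, e₁₃, e₂₃⟩ := hf.swap.fst_ne_of_eq_two_iff hE' (fun h => huniv h.symm) h2'
  exact htc ⟨hf.triangleCentered_of_eq_two_iff hE h2 d₁₂ d₁₃ d₂₃ e₁₂ e₁₃ e₂₃,
    hf.swap.triangleCentered_of_eq_two_iff hE' h2' e₁₂ e₁₃ e₂₃ d₁₂ d₁₃ d₂₃⟩

variable [Fintype V] [Fintype W]

lemma card_add_card_add_two_le_sum [Nonempty W] (hf : IsTRDF (dirProd G H) f) {a : V}
    (ha : ∀ y, 0 < f (a, y)) {T U : Finset (V × W)}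
    (hT : ∀ v ∈ T, 0 < f v ∧ ¬ G.Adj a v.1) (hU : ∀ v ∈ U, f v = 2) (hUT : U ⊆ T) :
    #T + 2 + #U ≤ ∑ v, f v := by
  classical
  obtain ⟨p, q, hpq, hp0, hq0, hp, hq⟩ := hf.exists_ne_pos_adj_fst ha
  have hpT : p ∉ T := fun h => (hT p h).2 hp
  have hqT : q ∉ T := fun h => (hT q h).2 hq
  calc #T + 2 + #U = #(insert p (insert q T)) + #U := by
        rw [card_insert_of_notMem (by simp [hpq, hpT]), card_insert_of_notMem hqT]
    _ ≤ ∑ v, f v := by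
        refine card_add_card_le_sum ?_ hU (hUT.trans ((subset_insert _ _).trans
          (subset_insert _ _)))
        simp only [mem_insert, forall_eq_or_imp]
        exact ⟨hp0, hq0, fun v hv => (hT v hv).1⟩

lemma eight_le_sum_of_forall_ne_two [Nonempty V] [Nonempty W] (hf : IsTRDF (dirProd G H) f)
    (hG : NoIsolated G) (hH : NoIsolated H)
    (huniv : ¬ ((∃ v, IsUniversalVertex G v) ∧ (∃ w, IsUniversalVertex H w)))
    (h2 : ∀ v, f v ≠ 2) : 8 ≤ ∑ v, f v := by
  have hsum := card_add_card_le_sum (f := f) (T := univ) (U := ∅)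
    (fun _ _ => hf.pos_of_forall_not_adj fun s hs => absurd hs (h2 s)) (by simp)
    (empty_subset _)
  rw [card_univ, Fintype.card_prod, card_empty] at hsum
  have := hG.one_lt_card
  have := hH.one_lt_card
  rcases four_le_card_or_four_le_card hG hH huniv with h4 | h4 <;> nlinarith

/-- Every vertex outside `N(s.1) × N(s.2)` is positive, and so is some neighbour of `s`. -/
lemma eight_le_sum_of_eq_two_iff_eq [Nonempty V] [Nonempty W] (hf : IsTRDF (dirProd G H) f)
    (hG : NoIsolated G) (hH : NoIsolated H)
    (huniv : ¬ ((∃ v, IsUniversalVertex G v) ∧ (∃ w, IsUniversalVertex H w)))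
    {s : V × W} (h2 : ∀ v, f v = 2 ↔ v = s) : 8 ≤ ∑ v, f v := by
  classical
  obtain ⟨x, hsx, hx0⟩ := hf.2.2 s (by rw [(h2 s).2 rfl]; norm_num)
  set N := G.neighborFinset s.1 ×ˢ H.neighborFinset s.2
  have hxN : x ∉ Nᶜ := by simpa [N] using hsx
  have hNc : ∀ v ∈ Nᶜ, 0 < f v := fun v hv => hf.pos_of_forall_not_adj fun t ht hvt => by
    rw [h2] at ht
    subst ht
    simp only [N, mem_compl, mem_product, SimpleGraph.mem_neighborFinset] at hv
    exact hv ⟨hvt.1.symm, hvt.2.symm⟩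
  have hsum := card_add_card_le_sum (T := insert x Nᶜ) (U := {s})
    (by simpa only [mem_insert, forall_eq_or_imp] using ⟨hx0, hNc⟩) (by simp [h2])
    (singleton_subset_iff.mpr (mem_insert_of_mem (by simp [N])))
  rw [card_insert_of_notMem hxN, card_compl, card_product, card_singleton,
    SimpleGraph.card_neighborFinset_eq_degree, SimpleGraph.card_neighborFinset_eq_degree,
    Fintype.card_prod] at hsum
  have := G.degree_lt_card_verts s.1
  have := H.degree_lt_card_verts s.2
  have := hG.one_lt_card
  have := hH.one_lt_card
  have h4 := four_le_card_or_four_le_card hG hH huniv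
  have hdeg : G.degree s.1 * H.degree s.2 + 6 ≤ Fintype.card V * Fintype.card W := by
    by_cases hU : IsUniversalVertex G s.1
    · have := degree_add_two_le_card (v := s.2) fun hU' => huniv ⟨⟨_, hU⟩, ⟨_, hU'⟩⟩
      rcases h4 with h4 | h4 <;> nlinarith [Nat.mul_le_mul (G.degree_lt_card_verts s.1) this]
    · have := degree_add_two_le_card hU
      rcases h4 with h4 | h4 <;> nlinarith [Nat.mul_le_mul this (H.degree_lt_card_verts s.2)]
  omega

lemma eight_le_sum_of_not_adj_fst [Nonempty W] (hf : IsTRDF (dirProd G H) f)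
    (hH : NoIsolated H)
    (huniv : ¬ ((∃ v, IsUniversalVertex G v) ∧ (∃ w, IsUniversalVertex H w)))
    {s t : V × W} (h2 : ∀ v, f v = 2 ↔ v = s ∨ v = t) (hst : s ≠ t)
    (hadj : ¬ G.Adj s.1 t.1) : 8 ≤ ∑ v, f v := by
  classical
  have hrow : ∀ a, ¬ G.Adj a s.1 → ¬ G.Adj a t.1 → ∀ y, 0 < f (a, y) := fun a hs ht _ =>
    hf.pos_of_forall_not_adj fun r hr h => by
      rcases (h2 r).1 hr with rfl | rfl
      exacts [hs h.1, ht h.1]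
  have hs1 := hrow s.1 (G.loopless.irrefl _) hadj
  have rows : ∀ A : Finset V, (∀ a ∈ A, ¬ G.Adj s.1 a ∧ ∀ y, 0 < f (a, y)) → s.1 ∈ A →
      t.1 ∈ A → 4 ≤ #A * Fintype.card W → 8 ≤ ∑ v, f v := by
    intro A hA hsA htA hcard
    have := hf.card_add_card_add_two_le_sum hs1 (T := A ×ˢ univ) (U := {s, t})
      (fun v hv => (hA v.1 (mem_product.mp hv).1).symm.imp_left (· v.2)) (by simp [h2])
      (by simp [insert_subset_iff, hsA, htA])
    rw [card_product, card_univ, card_pair hst] at this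
    omega
  by_cases heq : t.1 = s.1
  · by_cases hu : IsUniversalVertex G s.1
    · refine rows {s.1} (by simpa using hs1) (mem_singleton_self _) (by simp [heq]) ?_
      simpa using hH.four_le_card fun hU => huniv ⟨⟨_, hu⟩, hU⟩
    · simp only [IsUniversalVertex, not_forall] at hu
      obtain ⟨a, hne, hna⟩ := hu
      have := hH.one_lt_card
      refine rows {s.1, a} ?_ (by simp) (by simp [heq]) (by rw [card_pair hne.symm]; omega)
      simp only [mem_insert, mem_singleton, forall_eq_or_imp, forall_eq]
      exact ⟨⟨G.loopless.irrefl _, hs1⟩, hna,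
        hrow a (fun h => hna h.symm) (heq ▸ fun h => hna h.symm)⟩
  · have := hH.one_lt_card
    refine rows {s.1, t.1} ?_ (by simp) (by simp) (by rw [card_pair (Ne.symm heq)]; omega)
    simp only [mem_insert, mem_singleton, forall_eq_or_imp, forall_eq]
    exact ⟨⟨G.loopless.irrefl _, hs1⟩, hadj,
      hrow t.1 (fun h => hadj h.symm) (G.loopless.irrefl _)⟩

lemma eight_le_sum_of_adj (hf : IsTRDF (dirProd G H) f) {s t : V × W}
    (h2 : ∀ v, f v = 2 ↔ v = s ∨ v = t) (hGst : G.Adj s.1 t.1) (hHst : H.Adj s.2 t.2)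
    (hU : ¬ ∃ v, IsUniversalVertex G v) : 8 ≤ ∑ v, f v := by
  classical
  simp only [IsUniversalVertex, not_exists, not_forall] at hU
  obtain ⟨g, hgt, htg⟩ := hU t.1
  obtain ⟨g', hg's, hsg'⟩ := hU s.1
  have hgs : g ≠ s.1 := fun h => htg (h ▸ hGst.symm)
  have hg't : g' ≠ t.1 := fun h => hsg' (h ▸ hGst)
  have hcol : ∀ x, ¬ G.Adj x t.1 → 0 < f (x, s.2) := fun x hx =>
    hf.pos_of_forall_not_adj fun r hr h => by
      rcases (h2 r).1 hr with rfl | rfl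
      exacts [H.loopless.irrefl _ h.2, hx h.1]
  have hcol' : ∀ x, ¬ G.Adj x s.1 → 0 < f (x, t.2) := fun x hx =>
    hf.pos_of_forall_not_adj fun r hr h => by
      rcases (h2 r).1 hr with rfl | rfl
      exacts [hx h.1, H.loopless.irrefl _ h.2]
  have hU2 : ∀ v ∈ ({s, t} : Finset (V × W)), f v = 2 := by simp [h2]
  let T := ({s.1, t.1, g} ×ˢ {s.2} ∪ {s.1, t.1, g'} ×ˢ {t.2} : Finset (V × W))
  have hT : ∀ v ∈ T, 0 < f v := by
    simp only [T, mem_union, mem_product, mem_insert, mem_singleton]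
    rintro ⟨x, y⟩ (⟨rfl | rfl | rfl, rfl⟩ | ⟨rfl | rfl | rfl, rfl⟩)
    exacts [(hU2 s (by simp)).symm ▸ two_pos, hcol _ (G.loopless.irrefl _),
      hcol _ fun h => htg h.symm, hcol' _ (G.loopless.irrefl _),
      (hU2 t (by simp)).symm ▸ two_pos, hcol' _ fun h => hsg' h.symm]
  have hsum := card_add_card_le_sum hT hU2 (by simp [insert_subset_iff, T])
  have h3 : #({s.1, t.1, g} : Finset V) = 3 := by
    rw [card_insert_of_notMem (by simp [hGst.ne, hgs.symm]), card_pair hgt.symm]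
  have h3' : #({s.1, t.1, g'} : Finset V) = 3 := by
    rw [card_insert_of_notMem (by simp [hGst.ne, hg's.symm]), card_pair hg't.symm]
  rw [card_union_of_disjoint (disjoint_product.mpr (.inr (by simpa using hHst.ne))),
    card_product, card_product, h3, h3', card_singleton, card_singleton,
    card_pair (Prod.ext_iff.not.mpr fun h => hGst.ne h.1)] at hsum
  omega

lemma eight_le_sum_of_eq_two_iff_eq_or_eq [Nonempty V] [Nonempty W] (hf : IsTRDF (dirProd G H) f)
    (hG : NoIsolated G) (hH : NoIsolated H)
    (huniv : ¬ ((∃ v, IsUniversalVertex G v) ∧ (∃ w, IsUniversalVertex H w)))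
    {s t : V × W} (h2 : ∀ v, f v = 2 ↔ v = s ∨ v = t) (hst : s ≠ t) : 8 ≤ ∑ v, f v := by
  have h2' : ∀ v, (f ∘ Prod.swap) v = 2 ↔ v = s.swap ∨ v = t.swap := fun v => by
    rw [Function.comp_apply, h2]
    simp only [Prod.swap_eq_iff_eq_swap]
  by_cases hGst : G.Adj s.1 t.1
  · by_cases hHst : H.Adj s.2 t.2
    · by_cases hU : ∃ v, IsUniversalVertex G v
      · rw [← sum_comp_swap]
        exact hf.swap.eight_le_sum_of_adj h2' hHst hGst fun hU' => huniv ⟨hU, hU'⟩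
      · exact hf.eight_le_sum_of_adj h2 hGst hHst hU
    · rw [← sum_comp_swap]
      exact hf.swap.eight_le_sum_of_not_adj_fst hG (fun h => huniv h.symm) h2'
        (Prod.swap_injective.ne hst) hHst
  · exact hf.eight_le_sum_of_not_adj_fst hH huniv h2 hst hGst

lemma eight_le_sum [Nonempty V] [Nonempty W] (hf : IsTRDF (dirProd G H) f)
    (hG : NoIsolated G) (hH : NoIsolated H)
    (huniv : ¬ ((∃ v, IsUniversalVertex G v) ∧ (∃ w, IsUniversalVertex H w)))
    (htc : ¬ (TriangleCentered G ∧ TriangleCentered H)) : 8 ≤ ∑ v, f v := by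
  classical
  by_contra! hlt
  have hsum := hf.sum_eq_card_add_two_mul_card
  have h3 : #{v | f v = 2} ≤ 3 := by omega
  interval_cases hS : #{v | f v = 2}
  · exact hlt.not_ge <| hf.eight_le_sum_of_forall_ne_two hG hH huniv fun v =>
      filter_eq_empty_iff.mp (card_eq_zero.mp hS) (mem_univ v)
  · obtain ⟨s, hs⟩ := card_eq_one.mp hS
    exact hlt.not_ge <| hf.eight_le_sum_of_eq_two_iff_eq hG hH huniv fun v => by
      simpa using Finset.ext_iff.mp hs v
  · obtain ⟨s, t, hst, hs⟩ := card_eq_two.mp hS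
    exact hlt.not_ge <| hf.eight_le_sum_of_eq_two_iff_eq_or_eq hG hH huniv
      (fun v => by simpa using Finset.ext_iff.mp hs v) hst
  · obtain ⟨s₁, s₂, s₃, -, -, -, hs⟩ := card_eq_three.mp hS
    have hE : {v | f v = 1}.Subsingleton := fun x hx y hy =>
      (card_le_one (s := {v | f v = 1})).mp (by omega) x (by simpa using hx) y (by simpa using hy)
    exact hf.not_subsingleton_eq_one huniv htc (fun v => by simpa using Finset.ext_iff.mp hs v) hE

end IsTRDF

theorem stmt_15 {V W : Type*} [Fintype V] [Fintype W]
    (G : SimpleGraph V) (H : SimpleGraph W)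
    (hG : NoIsolated G) (hH : NoIsolated H)
    (huniv : ¬ ((∃ v, IsUniversalVertex G v) ∧ (∃ w, IsUniversalVertex H w)))
    (htG : tdn G = 2) (htH : tdn H = 2)
    (htc : ¬ (TriangleCentered G ∧ TriangleCentered H)) :
    trdn (dirProd G H) = 8 := by
  classical
  obtain ⟨D, hD, hDcard⟩ := exists_isTotalDomSet_card_eq_tdn (G := G) (by omega)
  obtain ⟨E, hE, hEcard⟩ := exists_isTotalDomSet_card_eq_tdn (G := H) (by omega)
  have : Nonempty V := (card_pos.mp (by omega : 0 < #D)).to_type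
  have : Nonempty W := (card_pos.mp (by omega : 0 < #E)).to_type
  refine le_antisymm ?_ <|
    le_trdn (hD.isTRDF_dirProd hE) fun f hf => hf.eight_le_sum hG hH huniv htc
  calc trdn (dirProd G H) ≤ 2 * #D * #E := trdn_dirProd_le hD hE
    _ = 8 := by rw [hDcard, hEcard, htG, htH]
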